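/- Let ω, γ, κ > 0 and G, Δ ∈ ℝ, and let A be the real 4×4 matrix [[0, ω, 0, 0],[−ω, −γ, G, 0],[0, 0, −κ, Δ],[G, 0, −Δ, −κ]]. Define s₁ = 2γκ·([κ² + (ω − Δ)²]·[κ² + (ω + Δ)²] + γ·[(γ + 2κ)(κ² + Δ²) + 2κω²]) + Δ·ω·G²·(γ + 2κ)² and s₂ = ω(κ² + Δ²) − G²Δ. Then every eigenvalue of A (over ℂ) has strictly negative real part if and only if s₁ > 0 and s₂ > 0. -/

import Mathlib

/-!
The eigenvalues of `driftA` are the roots of its characteristic polynomial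
`X⁴ + a X³ + b X² + c X + d`, whose coefficients `a`, `c` are automatically positive.
Any real monic quartic is a product of two real monic quadratics `X² + pᵢ X + qᵢ`
(take a non-real root and its conjugate, or two real roots), and a real quadratic has
its roots in the open left half-plane iff both its coefficients are positive. For
`a, c > 0`, the condition `pᵢ, qᵢ > 0` is equivalent to `d = q₁ q₂ > 0` together with
positivity of the Hurwitz determinant `c (a b - c) - a² d = p₁ p₂ ((q₁ - q₂)² + a c)`.
For `driftA` one has `d = ω s₂` and the Hurwitz determinant is `s₁`.
-/

open Matrix

noncomputable section

/-- Drift matrix of the linearized optomechanical quantum Langevin equations in the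
quadrature basis `(δq, δp, δX, δY)`. -/
def driftA (ω γ κ G Δ : ℝ) : Matrix (Fin 4) (Fin 4) ℝ :=
  !![0, ω, 0, 0;
     -ω, -γ, G, 0;
     0, 0, -κ, Δ;
     G, 0, -Δ, -κ]

open Polynomial

theorem Matrix.mem_spectrum_map_ofReal_iff {n : Type*} [Fintype n] [DecidableEq n]
    (M : Matrix n n ℝ) (z : ℂ) :
    z ∈ spectrum ℂ (M.map Complex.ofReal) ↔ aeval z M.charpoly = 0 := by
  rw [mem_spectrum_iff_isRoot_charpoly, ← Complex.coe_algebraMap, charpoly_map, IsRoot,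
    eval_map_algebraMap]

namespace Polynomial

def IsHurwitzStable (P : ℝ[X]) : Prop := ∀ z : ℂ, aeval z P = 0 → z.re < 0

theorem isHurwitzStable_mul {P Q : ℝ[X]} :
    (P * Q).IsHurwitzStable ↔ P.IsHurwitzStable ∧ Q.IsHurwitzStable := by
  simp only [IsHurwitzStable, aeval_mul, mul_eq_zero, or_imp, forall_and]

theorem isHurwitzStable_quadratic (p q : ℝ) :
    (X ^ 2 + C p * X + C q).IsHurwitzStable ↔ 0 < p ∧ 0 < q := by
  simp only [IsHurwitzStable, aeval_add, aeval_mul, aeval_X_pow, aeval_X, aeval_C,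
    Complex.coe_algebraMap]
  constructor
  · intro h
    have hdeg : (X ^ 2 + C p * X + C q).degree = 2 := by compute_degree!
    obtain ⟨z, hz⟩ : ∃ z : ℂ, z ^ 2 + p * z + q = 0 := by
      simpa using IsAlgClosed.exists_aeval_eq_zero ℂ _ (hdeg.trans_ne two_ne_zero)
    -- The other root `w = -p - z` satisfies `z * w = q` and `w.im = -z.im`,
    -- so `q = z.re * w.re + z.im ^ 2`.
    set w : ℂ := -p - z with hw
    have hzw : z * w = q := by linear_combination -hz
    have hz_re := h z hz
    have hw_re := h w (by linear_combination hz)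
    have hq : q = z.re * w.re + z.im ^ 2 := by
      simpa [hw, sq] using (congrArg Complex.re hzw).symm
    constructor
    · simpa [hw] using show 0 < -(z.re + w.re) by linarith
    · rw [hq]; nlinarith [sq_nonneg z.im]
  · rintro ⟨hp, hq⟩ z hz
    have hre : z.re ^ 2 - z.im ^ 2 + p * z.re + q = 0 := by
      simpa [sq] using congrArg Complex.re hz
    have him : z.im * (2 * z.re + p) = 0 := by
      have := congrArg Complex.im hz
      simp only [sq, Complex.add_im, Complex.mul_im, Complex.ofReal_re, Complex.ofReal_im,
        Complex.zero_im] at this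
      linear_combination this
    rcases mul_eq_zero.mp him with h | h
    · nlinarith
    · linarith

theorem exists_linear_or_quadratic_dvd {P : ℝ[X]} (hP : 0 < P.degree) :
    (∃ r : ℝ, X - C r ∣ P) ∨ ∃ p q : ℝ, X ^ 2 + C p * X + C q ∣ P := by
  obtain ⟨z, hz⟩ := IsAlgClosed.exists_aeval_eq_zero ℂ P hP.ne'
  by_cases him : z.im = 0
  · left
    refine ⟨z.re, dvd_iff_isRoot.mpr ?_⟩
    rw [← Complex.re_add_im z, him, Complex.ofReal_zero, zero_mul, add_zero,
      ← Complex.coe_algebraMap, aeval_algebraMap_apply_eq_algebraMap_eval] at hz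
    simpa using hz
  · right
    refine ⟨-(2 * z.re), ‖z‖ ^ 2, ?_⟩
    simpa [sub_eq_add_neg] using quadratic_dvd_of_aeval_eq_zero_im_ne_zero P hz him

theorem exists_quadratic_dvd {P : ℝ[X]} (hP : 2 ≤ P.natDegree) :
    ∃ p q : ℝ, X ^ 2 + C p * X + C q ∣ P := by
  rcases exists_linear_or_quadratic_dvd (P := P) (natDegree_pos_iff_degree_pos.mp (by omega))
    with ⟨r, Q, rfl⟩ | h
  · have hQ : 0 < Q.degree := by
      have hQ0 : Q ≠ 0 := by rintro rfl; simp at hP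
      rw [natDegree_mul (X_sub_C_ne_zero r) hQ0, natDegree_X_sub_C] at hP
      exact natDegree_pos_iff_degree_pos.mp (by omega)
    rcases exists_linear_or_quadratic_dvd hQ with ⟨s, hs⟩ | ⟨p, q, hpq⟩
    · refine ⟨-(r + s), r * s, ?_⟩
      rw [show X ^ 2 + C (-(r + s)) * X + C (r * s) = (X - C r) * (X - C s) by
        simp only [map_neg, map_add, map_mul]; ring]
      exact mul_dvd_mul_left _ hs
    · exact ⟨p, q, hpq.mul_left _⟩
  · exact h

theorem quadratic_mul_quadratic (p₁ q₁ p₂ q₂ : ℝ) :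
    (X ^ 2 + C p₁ * X + C q₁) * (X ^ 2 + C p₂ * X + C q₂) =
      X ^ 4 + C (p₁ + p₂) * X ^ 3 + C (q₁ + q₂ + p₁ * p₂) * X ^ 2
        + C (p₁ * q₂ + p₂ * q₁) * X + C (q₁ * q₂) := by
  simp only [map_add, map_mul]
  ring

theorem exists_quadratic_factors_of_quartic (a b c d : ℝ) :
    ∃ p₁ q₁ p₂ q₂ : ℝ, a = p₁ + p₂ ∧ b = q₁ + q₂ + p₁ * p₂ ∧ c = p₁ * q₂ + p₂ * q₁ ∧
      d = q₁ * q₂ := by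
  have hP : (X ^ 4 + C a * X ^ 3 + C b * X ^ 2 + C c * X + C d).natDegree = 4 := by
    compute_degree!
  have hPmonic : (X ^ 4 + C a * X ^ 3 + C b * X ^ 2 + C c * X + C d).Monic := by monicity!
  obtain ⟨p₁, q₁, Q, hQ⟩ := exists_quadratic_dvd ((by norm_num : 2 ≤ 4).trans hP.ge)
  have hF : (X ^ 2 + C p₁ * X + C q₁).Monic := by monicity!
  have hFdeg : (X ^ 2 + C p₁ * X + C q₁).natDegree = 2 := by compute_degree!
  have hQmonic : Q.Monic := hF.of_mul_monic_left (hQ ▸ hPmonic)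
  have hQdeg : Q.natDegree = 2 := by
    have := congrArg natDegree hQ
    rw [hF.natDegree_mul hQmonic, hFdeg, hP] at this
    omega
  have hQ2 : Q.coeff 2 = 1 := hQdeg ▸ hQmonic
  have hQeq := eq_quadratic_of_degree_le_two (natDegree_le_iff_degree_le.mp hQdeg.le)
  rw [hQ2, map_one, one_mul] at hQeq
  rw [hQeq, quadratic_mul_quadratic] at hQ
  simp only [Polynomial.ext_iff, coeff_add, coeff_C_mul, coeff_X_pow, coeff_X, coeff_C] at hQ
  refine ⟨p₁, q₁, Q.coeff 1, Q.coeff 0, ?_, ?_, ?_, ?_⟩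
  · simpa using hQ 3
  · simpa using hQ 2
  · simpa using hQ 1
  · simpa using hQ 0

theorem routh_hurwitz_quadratic_pair {p₁ q₁ p₂ q₂ : ℝ} (ha : 0 < p₁ + p₂)
    (hc : 0 < p₁ * q₂ + p₂ * q₁) :
    ((0 < p₁ ∧ 0 < q₁) ∧ 0 < p₂ ∧ 0 < q₂) ↔
      0 < q₁ * q₂ ∧ 0 < p₁ * p₂ * ((q₁ - q₂) ^ 2 + (p₁ + p₂) * (p₁ * q₂ + p₂ * q₁)) := by
  have hK : 0 < (q₁ - q₂) ^ 2 + (p₁ + p₂) * (p₁ * q₂ + p₂ * q₁) := by positivity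
  constructor
  · rintro ⟨⟨hp₁, hq₁⟩, hp₂, hq₂⟩
    exact ⟨by positivity, by positivity⟩
  · rintro ⟨hq, hpK⟩
    have hp : 0 < p₁ * p₂ := pos_of_mul_pos_left hpK hK.le
    have hp₁ : 0 < p₁ := by nlinarith
    have hp₂ : 0 < p₂ := by nlinarith
    -- `q₁, q₂` have the same sign, and both negative would make `p₁ * q₂ + p₂ * q₁` negative.
    have hq₁ : 0 < q₁ := by
      by_contra! hq₁
      have hq₂ : q₂ < 0 := by nlinarith
      nlinarith
    exact ⟨⟨hp₁, hq₁⟩, hp₂, pos_of_mul_pos_right hq hq₁.le⟩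

theorem isHurwitzStable_quartic_iff {a b c d : ℝ} (ha : 0 < a) (hc : 0 < c) :
    (X ^ 4 + C a * X ^ 3 + C b * X ^ 2 + C c * X + C d).IsHurwitzStable ↔
      0 < d ∧ 0 < c * (a * b - c) - a ^ 2 * d := by
  obtain ⟨p₁, q₁, p₂, q₂, rfl, rfl, rfl, rfl⟩ := exists_quadratic_factors_of_quartic a b c d
  have hurwitz_det : (p₁ * q₂ + p₂ * q₁) * ((p₁ + p₂) * (q₁ + q₂ + p₁ * p₂) - (p₁ * q₂ + p₂ * q₁))
      - (p₁ + p₂) ^ 2 * (q₁ * q₂) =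
        p₁ * p₂ * ((q₁ - q₂) ^ 2 + (p₁ + p₂) * (p₁ * q₂ + p₂ * q₁)) := by ring
  rw [← quadratic_mul_quadratic, isHurwitzStable_mul, isHurwitzStable_quadratic,
    isHurwitzStable_quadratic, hurwitz_det, routh_hurwitz_quadratic_pair ha hc]

end Polynomial

theorem charpoly_driftA (ω γ κ G Δ : ℝ) :
    (driftA ω γ κ G Δ).charpoly = X ^ 4 + C (γ + 2 * κ) * X ^ 3
      + C (ω ^ 2 + κ ^ 2 + Δ ^ 2 + 2 * γ * κ) * X ^ 2
      + C (γ * (κ ^ 2 + Δ ^ 2) + 2 * κ * ω ^ 2) * X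
      + C (ω * (ω * (κ ^ 2 + Δ ^ 2) - G ^ 2 * Δ)) := by
  simp [charpoly, charmatrix, driftA, det_succ_row_zero, Fin.sum_univ_succ, Fin.succAbove, C_ofNat]
  ring

theorem routh_hurwitz_optomech (ω γ κ G Δ : ℝ)
    (hω : 0 < ω) (hγ : 0 < γ) (hκ : 0 < κ) :
    (∀ z ∈ spectrum ℂ ((driftA ω γ κ G Δ).map Complex.ofReal), z.re < 0) ↔
      (0 < 2 * γ * κ * ((κ ^ 2 + (ω - Δ) ^ 2) * (κ ^ 2 + (ω + Δ) ^ 2) +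
            γ * ((γ + 2 * κ) * (κ ^ 2 + Δ ^ 2) + 2 * κ * ω ^ 2)) +
          Δ * ω * G ^ 2 * (γ + 2 * κ) ^ 2 ∧
        0 < ω * (κ ^ 2 + Δ ^ 2) - G ^ 2 * Δ) := by
  have hstable : (∀ z ∈ spectrum ℂ ((driftA ω γ κ G Δ).map Complex.ofReal), z.re < 0) ↔
      (driftA ω γ κ G Δ).charpoly.IsHurwitzStable :=
    forall_congr' fun z => by rw [mem_spectrum_map_ofReal_iff]
  have s₁_eq : (γ * (κ ^ 2 + Δ ^ 2) + 2 * κ * ω ^ 2) *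
        ((γ + 2 * κ) * (ω ^ 2 + κ ^ 2 + Δ ^ 2 + 2 * γ * κ) - (γ * (κ ^ 2 + Δ ^ 2) + 2 * κ * ω ^ 2))
      - (γ + 2 * κ) ^ 2 * (ω * (ω * (κ ^ 2 + Δ ^ 2) - G ^ 2 * Δ)) =
        2 * γ * κ * ((κ ^ 2 + (ω - Δ) ^ 2) * (κ ^ 2 + (ω + Δ) ^ 2) +
          γ * ((γ + 2 * κ) * (κ ^ 2 + Δ ^ 2) + 2 * κ * ω ^ 2)) +
        Δ * ω * G ^ 2 * (γ + 2 * κ) ^ 2 := by ring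
  rw [hstable, charpoly_driftA, isHurwitzStable_quartic_iff (by positivity) (by positivity), s₁_eq,
    mul_pos_iff_of_pos_left hω, and_comm]
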